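/- arXiv:2508.17125 — 3 statements merged into one kernel-verified Lean document; each statement's English description precedes it below -/
import Mathlib

section
/- The softmax function is 1-Lipschitz from the ℓ∞ norm to the ℓ1 norm: for any x, y ∈ ℝ^L, ‖softmax(x) − softmax(y)‖₁ ≤ 2·‖x − y‖∞. (In particular the attention-weight perturbation is bounded by a constant multiple of the maximum logit perturbation, independent of L.) -/
/-!
Write `v = x - y` and `r(t) = softmax (y + t • v)`. The derivative of `r` is
`r i * (v i - ∑ j, r j * v j)`. Pairing it with the signs of `softmax x - softmax y` turns the
ℓ¹ distance into `g 1 - g 0` for a scalar function `g`, and since `r` is a probability vector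
with `|v i| ≤ ε`, the derivative of `g` is at most `2 * ε` in absolute value; the mean value
inequality on `[0, 1]` concludes.
-/

noncomputable def softmax {L : ℕ} (x : Fin L → ℝ) (i : Fin L) : ℝ :=
  Real.exp (x i) / ∑ j, Real.exp (x j)

lemma softmax_nonneg {L : ℕ} (x : Fin L → ℝ) (i : Fin L) : 0 ≤ softmax x i := by
  unfold softmax; positivity

lemma sum_softmax {L : ℕ} (hL : 0 < L) (x : Fin L → ℝ) : ∑ i, softmax x i = 1 := by
  have : Nonempty (Fin L) := ⟨⟨0, hL⟩⟩
  simp only [softmax, ← Finset.sum_div]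
  exact div_self (Finset.sum_pos (fun j _ => Real.exp_pos (x j)) Finset.univ_nonempty).ne'

lemma hasDerivAt_softmax_add_smul {L : ℕ} (x v : Fin L → ℝ) (i : Fin L) (t : ℝ) :
    HasDerivAt (fun t : ℝ => softmax (x + t • v) i)
      (softmax (x + t • v) i * (v i - ∑ j, softmax (x + t • v) j * v j)) t := by
  have hexp (j : Fin L) : HasDerivAt (fun t : ℝ => Real.exp (x j + t * v j))
      (Real.exp (x j + t * v j) * v j) t := by
    simpa using ((hasDerivAt_id t).mul_const (v j)).const_add (x j) |>.exp
  have hZ : (∑ j, Real.exp (x j + t * v j)) ≠ 0 :=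
    (Finset.sum_pos (fun j _ => Real.exp_pos _) ⟨i, Finset.mem_univ i⟩).ne'
  simp only [softmax, Pi.add_apply, Pi.smul_apply, smul_eq_mul]
  refine ((hexp i).fun_div (HasDerivAt.fun_sum fun j _ => hexp j) hZ).congr_deriv ?_
  simp only [div_mul_eq_mul_div, ← Finset.sum_div]
  field_simp

lemma abs_sum_mul_sub_weightedMean_le {ι : Type*} [Fintype ι] {r v s : ι → ℝ} {ε : ℝ}
    (hr : ∀ i, 0 ≤ r i) (hr1 : ∑ i, r i = 1) (hv : ∀ i, |v i| ≤ ε) (hs : ∀ i, |s i| ≤ 1) :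
    |∑ i, s i * (r i * (v i - ∑ j, r j * v j))| ≤ 2 * ε := by
  have hmean : |∑ j, r j * v j| ≤ ε := calc
    |∑ j, r j * v j| ≤ ∑ j, r j * ε := by
      refine (Finset.abs_sum_le_sum_abs _ _).trans (Finset.sum_le_sum fun j _ => ?_)
      rw [abs_mul, abs_of_nonneg (hr j)]
      exact mul_le_mul_of_nonneg_left (hv j) (hr j)
    _ = ε := by rw [← Finset.sum_mul, hr1, one_mul]
  calc |∑ i, s i * (r i * (v i - ∑ j, r j * v j))|
      ≤ ∑ i, r i * (2 * ε) := by
        refine (Finset.abs_sum_le_sum_abs _ _).trans (Finset.sum_le_sum fun i _ => ?_)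
        rw [abs_mul, abs_mul, abs_of_nonneg (hr i)]
        have hcentered : |v i - ∑ j, r j * v j| ≤ 2 * ε := by
          linarith [abs_sub (v i) (∑ j, r j * v j), hv i]
        simpa only [one_mul] using mul_le_mul (hs i) (mul_le_mul_of_nonneg_left hcentered (hr i))
          (mul_nonneg (hr i) (abs_nonneg _)) zero_le_one
    _ = 2 * ε := by rw [← Finset.sum_mul, hr1, one_mul]

lemma abs_coe_sign_le_one (a : ℝ) : |(SignType.sign a : ℝ)| ≤ 1 := by
  rcases SignType.sign a with _ | _ | _ <;> simp

/-- Softmax is Lipschitz from ℓ∞ to ℓ1 with constant 2, independently of L. -/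
theorem softmax_lipschitz {L : ℕ} (hL : 0 < L) (x y : Fin L → ℝ) :
    ∑ i, |softmax x i - softmax y i| ≤
      2 * Finset.univ.sup' (Finset.univ_nonempty_iff.mpr ⟨⟨0, hL⟩⟩)
        (fun i => |x i - y i|) := by
  set ε := Finset.univ.sup' (Finset.univ_nonempty_iff.mpr ⟨⟨0, hL⟩⟩) (fun i => |x i - y i|)
  set s : Fin L → ℝ := fun i => SignType.sign (softmax x i - softmax y i)
  set g : ℝ → ℝ := fun t => ∑ i, s i * softmax (y + t • (x - y)) i
  have hg (t : ℝ) : HasDerivAt g (∑ i, s i * (softmax (y + t • (x - y)) i *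
      ((x - y) i - ∑ j, softmax (y + t • (x - y)) j * (x - y) j))) t :=
    HasDerivAt.fun_sum fun i _ => (hasDerivAt_softmax_add_smul y (x - y) i t).const_mul (s i)
  have hbound := norm_image_sub_le_of_norm_deriv_le_segment_01' (f := g)
    (fun t _ => (hg t).hasDerivWithinAt) fun t _ =>
      abs_sum_mul_sub_weightedMean_le (ε := ε) (fun i => softmax_nonneg _ i) (sum_softmax hL _)
        (fun i => Finset.le_sup' (fun i => |x i - y i|) (Finset.mem_univ i))
        fun i => abs_coe_sign_le_one _
  have hg1 : g 1 - g 0 = ∑ i, |softmax x i - softmax y i| := by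
    simp only [g, s, one_smul, zero_smul, add_zero, add_sub_cancel, ← Finset.sum_sub_distrib,
      ← mul_sub, sign_mul_self]
  rwa [hg1, Real.norm_eq_abs, abs_of_nonneg (Finset.sum_nonneg fun i _ => abs_nonneg _)] at hbound
end

section
/- Let Q ∈ ℝ^d, K, K̂ ∈ ℝ^{L×d}, V ∈ ℝ^{L×d} with ‖V_i‖₂ ≤ c for all rows. Define o = softmax(Q Kᵀ)ᵀ V and ô = softmax(Q K̂ᵀ)ᵀ V. Then ‖o − ô‖₂ ≤ 2c · ‖Q‖₂ · max_i ‖K_i − K̂_i‖₂, a bound independent of L. -/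
lemma exp_key (t : ℝ) (ht : 0 ≤ t) : 2 * (Real.exp t - 1) ≤ t * (Real.exp t + 1) := by
  have hderiv : ∀ s : ℝ, HasDerivAt (fun u => u * (Real.exp u + 1) - 2 * (Real.exp u - 1))
      (1 * (Real.exp s + 1) + s * Real.exp s - 2 * Real.exp s) s := fun s =>
    (((hasDerivAt_id s).mul ((Real.hasDerivAt_exp s).add_const 1)).sub
      (((Real.hasDerivAt_exp s).sub_const 1).const_mul 2))
  have hmono : MonotoneOn (fun u => u * (Real.exp u + 1) - 2 * (Real.exp u - 1)) (Set.Ici 0) := by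
    apply monotoneOn_of_deriv_nonneg (convex_Ici 0)
    · exact Continuous.continuousOn (by continuity)
    · intro s hs; exact (hderiv s).differentiableAt.differentiableWithinAt
    · intro s hs
      rw [(hderiv s).deriv]
      have h1 := Real.add_one_le_exp (-s)
      have h2 : Real.exp (-s) * Real.exp s = 1 := by rw [← Real.exp_add]; simp
      nlinarith [Real.exp_pos s, Real.exp_pos (-s)]
  have h0 := hmono (Set.self_mem_Ici) (Set.mem_Ici.mpr ht) ht
  simp only [Real.exp_zero] at h0
  linarith



lemma exp_sub_le (a b : ℝ) (h : b ≤ a) :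
    Real.exp a - Real.exp b ≤ (a - b) * (Real.exp a + Real.exp b) / 2 := by
  have hk := exp_key (a - b) (sub_nonneg.mpr h)
  have hb := Real.exp_pos b
  have he : Real.exp b * Real.exp (a - b) = Real.exp a := by
    rw [← Real.exp_add]; ring_nf
  nlinarith [Real.exp_pos (a - b)]

lemma abs_exp_sub (a b : ℝ) :
    |Real.exp a - Real.exp b| ≤ |a - b| * (Real.exp a + Real.exp b) / 2 := by
  rcases le_total b a with h | h
  · rw [abs_of_nonneg (sub_nonneg.mpr (Real.exp_le_exp.mpr h)),
      abs_of_nonneg (sub_nonneg.mpr h)]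
    exact exp_sub_le a b h
  · rw [abs_sub_comm, abs_sub_comm a b,
      abs_of_nonneg (sub_nonneg.mpr (Real.exp_le_exp.mpr h)),
      abs_of_nonneg (sub_nonneg.mpr h)]
    have := exp_sub_le b a h
    linarith




lemma softmax_l1 {L : ℕ} (hL : 0 < L) (x y : Fin L → ℝ) (ε : ℝ)
    (hε : ∀ i, |x i - y i| ≤ ε) :
    ∑ i, |softmax x i - softmax y i| ≤ 2 * ε := by
  have hne : (Finset.univ : Finset (Fin L)).Nonempty := ⟨⟨0, hL⟩, Finset.mem_univ _⟩
  set Sx := ∑ j, Real.exp (x j) with hSxdef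
  set Sy := ∑ j, Real.exp (y j) with hSydef
  have hSx : 0 < Sx := Finset.sum_pos (fun j _ => Real.exp_pos _) hne
  have hSy : 0 < Sy := Finset.sum_pos (fun j _ => Real.exp_pos _) hne
  have hε0 : 0 ≤ ε := le_trans (abs_nonneg _) (hε ⟨0, hL⟩)
  have key : ∀ i, |softmax x i - softmax y i| * (Sx * Sy) ≤
      ε * (Real.exp (x i) * Sy + Real.exp (y i) * Sx) := by
    intro i
    have hdiff : softmax x i - softmax y i =
        (Real.exp (x i) * Sy - Real.exp (y i) * Sx) / (Sx * Sy) := by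
      unfold softmax
      rw [div_sub_div _ _ hSx.ne' hSy.ne']
      ring
    have hnum : Real.exp (x i) * Sy - Real.exp (y i) * Sx =
        ∑ j, (Real.exp (x i + y j) - Real.exp (y i + x j)) := by
      rw [hSxdef, hSydef, Finset.mul_sum, Finset.mul_sum, ← Finset.sum_sub_distrib]
      simp [Real.exp_add]
    have hnb : |Real.exp (x i) * Sy - Real.exp (y i) * Sx| ≤
        ε * (Real.exp (x i) * Sy + Real.exp (y i) * Sx) := by
      rw [hnum]
      calc |∑ j, (Real.exp (x i + y j) - Real.exp (y i + x j))|
          ≤ ∑ j, |Real.exp (x i + y j) - Real.exp (y i + x j)| :=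
            Finset.abs_sum_le_sum_abs _ _
        _ ≤ ∑ j, ε * (Real.exp (x i + y j) + Real.exp (y i + x j)) := by
            apply Finset.sum_le_sum
            intro j _
            have h1 := abs_exp_sub (x i + y j) (y i + x j)
            have h2 : |(x i + y j) - (y i + x j)| ≤ 2 * ε := by
              have := hε i; have := hε j
              have : |(x i + y j) - (y i + x j)| ≤ |x i - y i| + |x j - y j| := by
                have : (x i + y j) - (y i + x j) = (x i - y i) - (x j - y j) := by ring
                rw [this]; exact abs_sub _ _
              linarith [hε i, hε j]
            have hpos : 0 ≤ Real.exp (x i + y j) + Real.exp (y i + x j) := by positivity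
            calc |Real.exp (x i + y j) - Real.exp (y i + x j)|
                ≤ |(x i + y j) - (y i + x j)| * (Real.exp (x i + y j) + Real.exp (y i + x j)) / 2 := h1
              _ ≤ 2 * ε * (Real.exp (x i + y j) + Real.exp (y i + x j)) / 2 := by
                  apply div_le_div_of_nonneg_right ?_ (by norm_num)
                  exact mul_le_mul_of_nonneg_right h2 hpos
              _ = ε * (Real.exp (x i + y j) + Real.exp (y i + x j)) := by ring
        _ = ε * (Real.exp (x i) * Sy + Real.exp (y i) * Sx) := by
            simp only [Real.exp_add, hSxdef, hSydef, Finset.mul_sum,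
              ← Finset.sum_add_distrib]
    rw [hdiff, abs_div, abs_of_pos (mul_pos hSx hSy), div_mul_cancel₀ _ (mul_pos hSx hSy).ne']
    exact hnb
  have hsum : (∑ i, |softmax x i - softmax y i|) * (Sx * Sy) ≤ 2 * ε * (Sx * Sy) := by
    rw [Finset.sum_mul]
    calc ∑ i, |softmax x i - softmax y i| * (Sx * Sy)
        ≤ ∑ i, ε * (Real.exp (x i) * Sy + Real.exp (y i) * Sx) :=
          Finset.sum_le_sum (fun i _ => key i)
      _ = 2 * ε * (Sx * Sy) := by
          rw [← Finset.mul_sum, Finset.sum_add_distrib, ← Finset.sum_mul, ← Finset.sum_mul]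
          ring
  exact le_of_mul_le_mul_right hsum (mul_pos hSx hSy)

/-- E-tight output error bound: the attention output with quantized keys deviates
    by at most 2c·‖Q‖·max_i ‖K_i − K̂_i‖, independently of L. -/
theorem attention_output_error {L d : ℕ} (hL : 0 < L) (c : ℝ)
    (Q : EuclideanSpace ℝ (Fin d)) (K Kh V : Fin L → EuclideanSpace ℝ (Fin d))
    (hV : ∀ i, ‖V i‖ ≤ c) :
    ‖(∑ i, softmax (fun i => inner (𝕜 := ℝ) Q (K i)) i • V i) -
        ∑ i, softmax (fun i => inner (𝕜 := ℝ) Q (Kh i)) i • V i‖ ≤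
      2 * c * ‖Q‖ * Finset.univ.sup' (Finset.univ_nonempty_iff.mpr ⟨⟨0, hL⟩⟩)
        (fun i => ‖K i - Kh i‖) := by
  set x : Fin L → ℝ := fun i => inner (𝕜 := ℝ) Q (K i) with hx
  set y : Fin L → ℝ := fun i => inner (𝕜 := ℝ) Q (Kh i) with hy
  set M := Finset.univ.sup' (Finset.univ_nonempty_iff.mpr ⟨⟨0, hL⟩⟩)
    (fun i => ‖K i - Kh i‖) with hMdef
  have hM : ∀ i, ‖K i - Kh i‖ ≤ M := fun i =>
    Finset.le_sup' (fun i => ‖K i - Kh i‖) (Finset.mem_univ i)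
  have hc : 0 ≤ c := le_trans (norm_nonneg _) (hV ⟨0, hL⟩)
  have hxy : ∀ i, |x i - y i| ≤ ‖Q‖ * M := by
    intro i
    have h1 : x i - y i = inner (𝕜 := ℝ) Q (K i - Kh i) := by
      rw [inner_sub_right]
    rw [h1]
    calc |inner (𝕜 := ℝ) Q (K i - Kh i)| ≤ ‖Q‖ * ‖K i - Kh i‖ :=
          abs_real_inner_le_norm _ _
      _ ≤ ‖Q‖ * M := mul_le_mul_of_nonneg_left (hM i) (norm_nonneg Q)
  have hdiff : (∑ i, softmax x i • V i) - ∑ i, softmax y i • V i =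
      ∑ i, (softmax x i - softmax y i) • V i := by
    rw [← Finset.sum_sub_distrib]
    exact Finset.sum_congr rfl (fun i _ => (sub_smul _ _ _).symm)
  rw [hdiff]
  calc ‖∑ i, (softmax x i - softmax y i) • V i‖
      ≤ ∑ i, ‖(softmax x i - softmax y i) • V i‖ := norm_sum_le _ _
    _ = ∑ i, |softmax x i - softmax y i| * ‖V i‖ := by
        simp [norm_smul, Real.norm_eq_abs]
    _ ≤ ∑ i, |softmax x i - softmax y i| * c :=
        Finset.sum_le_sum (fun i _ => mul_le_mul_of_nonneg_left (hV i) (abs_nonneg _))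
    _ = c * ∑ i, |softmax x i - softmax y i| := by
        rw [← Finset.sum_mul, mul_comm]
    _ ≤ c * (2 * (‖Q‖ * M)) :=
        mul_le_mul_of_nonneg_left (softmax_l1 hL x y (‖Q‖ * M) hxy) hc
    _ = 2 * c * ‖Q‖ * M := by ring
end

section
/- Attention with quantized keys admits a bucket aggregation form: if K̂ = Δ·C with Δ ∈ {0,1}^{L×N} having one-hot rows, then softmax(Q K̂ᵀ)ᵀ V = (exp(Q Cᵀ)·(Δᵀ V)) / (exp(Q Cᵀ)·(Δᵀ 𝟙_L)), provided the denominator is positive (which it is since exp > 0 and Δᵀ𝟙_L has at least one positive entry when L ≥ 1). -/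
open Matrix

/-- Bucket aggregation form of attention with quantized keys:
    softmax(Q K̂ᵀ)ᵀ V = (exp(Q Cᵀ)·(Δᵀ V)) / (exp(Q Cᵀ)·(Δᵀ 𝟙_L)). -/
theorem quantized_attention_cacheable {L N d : ℕ} (hL : 0 < L)
    (Q : Matrix (Fin 1) (Fin d) ℝ) (C : Matrix (Fin N) (Fin d) ℝ)
    (Delta : Matrix (Fin L) (Fin N) ℝ) (V : Matrix (Fin L) (Fin d) ℝ)
    (honehot : ∀ i : Fin L, ∃ z : Fin N, Delta i z = 1 ∧ ∀ n : Fin N, n ≠ z → Delta i n = 0) :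
    ∀ j : Fin d,
      (∑ i, softmax (fun i => (Q * (Delta * C)ᵀ) 0 i) i * V i j) =
        (∑ n, Real.exp ((Q * Cᵀ) 0 n) * (Deltaᵀ * V) n j) /
          (∑ n, Real.exp ((Q * Cᵀ) 0 n) * (Deltaᵀ.mulVec (fun _ => 1) n)) := by
  intro j
  choose z hz1 hz0 using honehot
  have hscore : ∀ i, (Q * (Delta * C)ᵀ) 0 i = (Q * Cᵀ) 0 (z i) := by
    intro i
    simp only [Matrix.mul_apply, Matrix.transpose_apply]
    apply Finset.sum_congr rfl
    intro k _
    congr 1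
    rw [Finset.sum_eq_single (z i)]
    · simp [hz1 i]
    · intro n _ hn; simp [hz0 i n hn]
    · simp
  have hexp : ∀ i, Real.exp ((Q * (Delta * C)ᵀ) 0 i) =
      ∑ n, Delta i n * Real.exp ((Q * Cᵀ) 0 n) := by
    intro i
    rw [hscore i, Finset.sum_eq_single (z i)]
    · simp [hz1 i]
    · intro n _ hn; simp [hz0 i n hn]
    · simp
  have hden : (∑ i, Real.exp ((Q * (Delta * C)ᵀ) 0 i)) =
      ∑ n, Real.exp ((Q * Cᵀ) 0 n) * Deltaᵀ.mulVec (fun _ => 1) n := by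
    simp only [hexp, Matrix.mulVec, Matrix.transpose_apply, dotProduct, mul_one]
    rw [Finset.sum_comm]
    simp only [Finset.mul_sum]
    apply Finset.sum_congr rfl; intro n _
    apply Finset.sum_congr rfl; intro i _
    ring
  have hnum : (∑ i, Real.exp ((Q * (Delta * C)ᵀ) 0 i) * V i j) =
      ∑ n, Real.exp ((Q * Cᵀ) 0 n) * (Deltaᵀ * V) n j := by
    simp only [hexp]
    simp only [Finset.sum_mul, Finset.mul_sum]
    rw [Finset.sum_comm]
    apply Finset.sum_congr rfl; intro n _
    simp only [Matrix.mul_apply, Matrix.transpose_apply, Finset.mul_sum]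
    apply Finset.sum_congr rfl; intro i _
    ring
  simp only [softmax]
  simp only [div_mul_eq_mul_div]
  rw [← Finset.sum_div, hnum, hden]
end
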